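/- The 5-cube Q_5 contains three pairwise edge-disjoint symmetric chain decompositions. -/

import Mathlib

/-- The Hamming weight of a bitstring of length `n`, i.e., its number of 1-bits. -/
def wt {n : ℕ} (x : Fin n → Bool) : ℕ := (Finset.univ.filter fun i => x i = true).card

/-- The `n`-dimensional hypercube: vertices are bitstrings of length `n`, two of which are
adjacent iff they differ in exactly one position. -/
def cube (n : ℕ) : SimpleGraph (Fin n → Bool) where
  Adj x y := hammingDist x y = 1
  symm := ⟨by intro x y h; rwa [hammingDist_comm]⟩
  loopless := ⟨by intro x h; simp [hammingDist_self] at h⟩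
/-- A symmetric chain in the `n`-cube: a path `(x_k, x_{k+1}, …, x_{n−k})` in `cube n`
where `x_i` has Hamming weight `i` for each `k ≤ i ≤ n − k`. -/
def IsSymChain (n : ℕ) (c : List (Fin n → Bool)) : Prop :=
  c ≠ [] ∧ c.Chain' (cube n).Adj ∧
  ∃ k : ℕ, (∀ (i : ℕ) (h : i < c.length), wt (c.get ⟨i, h⟩) = k + i) ∧
    2 * k + (c.length - 1) = n

/-- A symmetric chain decomposition of the `n`-cube: a collection of symmetric chains
whose vertex sets partition the vertex set. -/
def IsSCD (n : ℕ) (D : Set (List (Fin n → Bool))) : Prop :=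
  (∀ c ∈ D, IsSymChain n c) ∧ ∀ x : Fin n → Bool, ∃! c, c ∈ D ∧ x ∈ c

/-- The edges lying on a chain, i.e., the unordered pairs of consecutive entries. -/
def chainEdges {V : Type*} (c : List V) : Set (Sym2 V) :=
  {e | ∃ (i : ℕ) (h : i + 1 < c.length),
    e = s(c.get ⟨i, Nat.lt_of_succ_lt h⟩, c.get ⟨i + 1, h⟩)}

/-- All edges lying on some chain of the collection `D`. -/
def scdEdges {n : ℕ} (D : Set (List (Fin n → Bool))) : Set (Sym2 (Fin n → Bool)) :=
  ⋃ c ∈ D, chainEdges c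

/-- Two chain decompositions are edge-disjoint if no edge lies on a chain of one
and also on a chain of the other. -/
def EdgeDisjointSCD {n : ℕ} (D D' : Set (List (Fin n → Bool))) : Prop :=
  Disjoint (scdEdges D) (scdEdges D')

/-! Let `σ` be the coordinate 3-cycle `(0 1 2)`. Permuting coordinates is a weight-preserving
automorphism of the cube, so it maps symmetric chain decompositions to symmetric chain
decompositions and preserves edge-disjointness. Hence for an SCD `D` of `Q_5`, the three SCDs
`D`, `σD`, `σ²D` are pairwise edge-disjoint as soon as `D` and `σD` are: since `σ³ = 1`, the other
two pairs are images of this one. A suitable `D` was found by computer search; that it is an SCD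
edge-disjoint from `σD` is checked by `decide`. -/

instance (n : ℕ) : DecidableRel (cube n).Adj := fun x y =>
  inferInstanceAs (Decidable (hammingDist x y = 1))

theorem hammingDist_comp_equiv {ι κ β : Type*} [Fintype ι] [Fintype κ] [DecidableEq β]
    (e : ι ≃ κ) (x y : κ → β) : hammingDist (x ∘ e) (y ∘ e) = hammingDist x y :=
  Finset.card_equiv e (by simp)

theorem wt_comp_equiv {n : ℕ} (e : Fin n ≃ Fin n) (x : Fin n → Bool) : wt (x ∘ e) = wt x :=
  Finset.card_equiv e (by simp)

theorem image_setOf_mem {α β : Type*} (f : α → β) (L : List α) :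
    f '' {x | x ∈ L} = {y | y ∈ L.map f} := by
  ext
  simp

def edgeList {V : Type*} (l : List V) : List (Sym2 V) :=
  List.zipWith (fun a b => s(a, b)) l l.tail

theorem mem_chainEdges_iff {V : Type*} {l : List V} {e : Sym2 V} :
    e ∈ chainEdges l ↔ e ∈ edgeList l := by
  simp only [chainEdges, edgeList, List.mem_iff_getElem, List.length_zipWith,
    List.length_tail, List.getElem_zipWith, List.getElem_tail, List.get_eq_getElem]
  constructor
  · rintro ⟨i, h, rfl⟩
    exact ⟨i, by omega, rfl⟩
  · rintro ⟨i, h, rfl⟩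
    exact ⟨i, by omega, rfl⟩

instance {V : Type*} [DecidableEq V] (l l' : List V) :
    Decidable (Disjoint (chainEdges l) (chainEdges l')) :=
  decidable_of_iff (∀ e ∈ edgeList l, e ∉ edgeList l') <| by
    simp only [Set.disjoint_left, mem_chainEdges_iff]

theorem edgeList_map {V W : Type*} (f : V → W) (l : List V) :
    edgeList (l.map f) = (edgeList l).map (Sym2.map f) := by
  simp only [edgeList, ← List.map_tail, List.zipWith_map, List.map_zipWith, Sym2.map_mk]

theorem chainEdges_map {V W : Type*} (f : V → W) (l : List V) :
    chainEdges (l.map f) = Sym2.map f '' chainEdges l := by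
  ext e
  simp [mem_chainEdges_iff, edgeList_map]

section Cube

variable {n : ℕ}

theorem isSymChain_iff {l : List (Fin n → Bool)} :
    IsSymChain n l ↔ l ≠ [] ∧ l.IsChain (cube n).Adj ∧
      (∀ (i : ℕ) (h : i < l.length), wt l[i] = wt l.headI + i) ∧
      2 * wt l.headI + (l.length - 1) = n := by
  constructor
  · rintro ⟨hne, hchain, k, hwt, hlen⟩
    obtain ⟨a, l, rfl⟩ := List.exists_cons_of_ne_nil hne
    obtain rfl : wt a = k := by simpa using hwt 0 (by simp)
    exact ⟨hne, hchain, hwt, hlen⟩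
  · rintro ⟨hne, hchain, hwt, hlen⟩
    exact ⟨hne, hchain, _, hwt, hlen⟩

instance : DecidablePred (IsSymChain n) := fun _ => decidable_of_iff _ isSymChain_iff.symm

theorem isSCD_setOf_mem_iff (L : List (List (Fin n → Bool))) :
    IsSCD n {l | l ∈ L} ↔ (∀ l ∈ L, IsSymChain n l) ∧
      ∀ x, ∃ l ∈ L, x ∈ l ∧ ∀ l' ∈ L, x ∈ l' → l' = l := by
  simp [IsSCD, ExistsUnique, and_assoc]

theorem edgeDisjointSCD_setOf_mem_iff (L L' : List (List (Fin n → Bool))) :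
    EdgeDisjointSCD {l | l ∈ L} {l | l ∈ L'} ↔
      ∀ l ∈ L, ∀ l' ∈ L', Disjoint (chainEdges l) (chainEdges l') := by
  rw [EdgeDisjointSCD, scdEdges, Set.disjoint_iUnion₂_left]
  simp only [scdEdges, Set.disjoint_iUnion₂_right]
  rfl

theorem scdEdges_image (f : (Fin n → Bool) → Fin n → Bool) (D : Set (List (Fin n → Bool))) :
    scdEdges (List.map f '' D) = Sym2.map f '' scdEdges D := by
  simp [scdEdges, Set.image_iUnion₂, chainEdges_map]

theorem EdgeDisjointSCD.symm {D D' : Set (List (Fin n → Bool))} (h : EdgeDisjointSCD D D') :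
    EdgeDisjointSCD D' D :=
  Disjoint.symm h

theorem EdgeDisjointSCD.image {f : (Fin n → Bool) → Fin n → Bool} (hf : Function.Injective f)
    {D D' : Set (List (Fin n → Bool))} (h : EdgeDisjointSCD D D') :
    EdgeDisjointSCD (List.map f '' D) (List.map f '' D') := by
  rw [EdgeDisjointSCD, scdEdges_image, scdEdges_image]
  exact (Set.disjoint_image_iff (Sym2.map.injective hf)).2 h

theorem IsSymChain.map (φ : cube n ≃g cube n) (hφ : ∀ x, wt (φ x) = wt x)
    {l : List (Fin n → Bool)} (hl : IsSymChain n l) : IsSymChain n (l.map φ) := by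
  obtain ⟨hne, hchain, k, hwt, hlen⟩ := hl
  refine ⟨by simpa using hne, (List.isChain_map φ).2 (hchain.imp fun a b h => φ.map_adj_iff.2 h),
    k, fun i h => ?_, by simpa using hlen⟩
  simpa [hφ] using hwt i (by simpa using h)

theorem IsSCD.image (φ : cube n ≃g cube n) (hφ : ∀ x, wt (φ x) = wt x)
    {D : Set (List (Fin n → Bool))} (hD : IsSCD n D) : IsSCD n (List.map φ '' D) := by
  obtain ⟨hchains, hcover⟩ := hD
  refine ⟨Set.forall_mem_image.2 fun l hl => (hchains l hl).map φ hφ, fun x => ?_⟩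
  obtain ⟨l, ⟨hl, hxl⟩, huniq⟩ := hcover (φ.symm x)
  refine ⟨l.map φ, ⟨Set.mem_image_of_mem _ hl, by simpa using List.mem_map_of_mem (f := φ) hxl⟩, ?_⟩
  rintro _ ⟨⟨l', hl', rfl⟩, hx⟩
  obtain ⟨y, hy, rfl⟩ := List.mem_map.1 hx
  rw [huniq l' ⟨hl', by simpa using hy⟩]

theorem exists_three_edgeDisjointSCD_of_order_three (φ : cube n ≃g cube n)
    (hφ : ∀ x, wt (φ x) = wt x) (hφ3 : ∀ x, φ (φ (φ x)) = x) {D : Set (List (Fin n → Bool))}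
    (hD : IsSCD n D) (hdisj : EdgeDisjointSCD D (List.map φ '' D)) :
    ∃ D : Fin 3 → Set (List (Fin n → Bool)),
      (∀ i, IsSCD n (D i)) ∧ ∀ i j, i ≠ j → EdgeDisjointSCD (D i) (D j) := by
  set T : Set (List (Fin n → Bool)) → Set (List (Fin n → Bool)) := (List.map φ '' ·)
  have hT3 : T (T (T D)) = D := by
    simp [T, Set.image_image, List.map_map, Function.comp_def, hφ3]
  have h12 : EdgeDisjointSCD (T D) (T (T D)) := hdisj.image φ.injective
  have h20 : EdgeDisjointSCD (T (T D)) D := by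
    have h23 : EdgeDisjointSCD (T (T D)) (T (T (T D))) := h12.image φ.injective
    rwa [hT3] at h23
  refine ⟨![D, T D, T (T D)], fun i => ?_, fun i j hij => ?_⟩
  · fin_cases i
    exacts [hD, hD.image φ hφ, (hD.image φ hφ).image φ hφ]
  · fin_cases i <;> fin_cases j
    exacts [absurd rfl hij, hdisj, h20.symm, hdisj.symm, absurd rfl hij, h12, h20, h12.symm,
      absurd rfl hij]

def permCoords (σ : Equiv.Perm (Fin n)) : cube n ≃g cube n where
  toEquiv := σ.symm.arrowCongr (Equiv.refl Bool)
  map_rel_iff' {x y} := by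
    change hammingDist (x ∘ σ) (y ∘ σ) = 1 ↔ hammingDist x y = 1
    rw [hammingDist_comp_equiv]

@[simp]
theorem permCoords_apply (σ : Equiv.Perm (Fin n)) (x : Fin n → Bool) : permCoords σ x = x ∘ σ :=
  rfl

theorem wt_permCoords (σ : Equiv.Perm (Fin n)) (x : Fin n → Bool) : wt (permCoords σ x) = wt x :=
  wt_comp_equiv σ x

end Cube

def scdQ5 : List (List (Fin 5 → Bool)) := [
  [![false, false, false, false, false], ![true, false, false, false, false], ![true, true, false, false, false], ![true, true, false, true, false], ![true, true, false, true, true], ![true, true, true, true, true]],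
  [![false, true, false, false, false], ![false, true, false, true, false], ![false, true, true, true, false], ![true, true, true, true, false]],
  [![false, false, true, false, false], ![false, true, true, false, false], ![false, true, true, false, true], ![true, true, true, false, true]],
  [![false, false, false, true, false], ![false, false, true, true, false], ![false, false, true, true, true], ![false, true, true, true, true]],
  [![false, false, false, false, true], ![false, false, true, false, true], ![true, false, true, false, true], ![true, false, true, true, true]],
  [![true, false, true, false, false], ![true, true, true, false, false]],
  [![true, false, false, true, false], ![true, false, true, true, false]],
  [![true, false, false, false, true], ![true, false, false, true, true]],
  [![false, true, false, false, true], ![true, true, false, false, true]],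
  [![false, false, false, true, true], ![false, true, false, true, true]]
]

/-- The 5-cube contains three pairwise edge-disjoint symmetric chain decompositions. -/
theorem three_edge_disjoint_SCDs_Q5 :
    ∃ D : Fin 3 → Set (List (Fin 5 → Bool)),
      (∀ i, IsSCD 5 (D i)) ∧ ∀ i j, i ≠ j → EdgeDisjointSCD (D i) (D j) := by
  have hσ3 : ∀ i : Fin 5, c[0, 1, 2] (c[0, 1, 2] (c[0, 1, 2] i)) = i := by decide
  have hD : IsSCD 5 {l | l ∈ scdQ5} := by
    rw [isSCD_setOf_mem_iff]
    decide
  have hdisj : EdgeDisjointSCD {l | l ∈ scdQ5}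
      (List.map (permCoords c[0, 1, 2]) '' {l | l ∈ scdQ5}) := by
    rw [image_setOf_mem, edgeDisjointSCD_setOf_mem_iff]
    decide
  exact exists_three_edgeDisjointSCD_of_order_three (permCoords c[0, 1, 2])
    (wt_permCoords c[0, 1, 2]) (fun x => by simp [Function.comp_def, hσ3]) hD hdisj
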